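/- arXiv:math/0605480 — 2 statements merged into one kernel-verified Lean document; each statement's English description precedes it below -/
import Mathlib

section
/- (Isometric embedding of K_m = ∫_m^{m+1} E_α dα into H.) Let m ∈ ℕ and let f₀ : ℝ → H₀ be strongly measurable with f₀(α) = 0 for almost every α ∉ (m, m+1] and ∫_m^{m+1} ‖f₀(α)‖² dα < ∞. Then there exists f ∈ 𝒮 such that f(α) = 0 for all α ≤ m, f(α) = f₀(α) for almost every α ∈ (m, m+1], f(α+1) = V_α(f(α)) for almost every α ≥ m, and ⟨f,f⟩ = ∫_m^{m+1} ‖f₀(α)‖² dα. -/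
open MeasureTheory Filter Topology

noncomputable section

variable {H₀ : Type*} [NormedAddCommGroup H₀] [InnerProductSpace ℂ H₀] [CompleteSpace H₀]

/-- `f : ℝ → H₀` is locally square-integrable: strongly measurable and
`∫_K ‖f α‖² dα < ∞` for every compact `K ⊆ ℝ`. -/
def LocSqInt (f : ℝ → H₀) : Prop :=
  StronglyMeasurable f ∧
    ∀ K : Set ℝ, IsCompact K → IntegrableOn (fun α => ‖f α‖ ^ 2) K volume

/-- The stable sections `𝒮` (with respect to the family `V` of isometries playing the
role of right multiplication by the unit vector `e ∈ E₁`). -/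
def StableSection (V : ℝ → H₀ →ₗᵢ[ℂ] H₀) (f : ℝ → H₀) : Prop :=
  LocSqInt f ∧ ∃ α₀ > (0 : ℝ), ∀ᵐ α ∂(volume : Measure ℝ), α₀ ≤ α → f (α + 1) = V α (f α)

/-- The null space `𝒩 ⊆ 𝒮` of sections vanishing a.e. eventually. -/
def NullSection (V : ℝ → H₀ →ₗᵢ[ℂ] H₀) (f : ℝ → H₀) : Prop :=
  StableSection V f ∧ ∃ α₀ > (0 : ℝ), ∀ᵐ α ∂(volume : Measure ℝ), α₀ ≤ α → f α = 0

/-- The semi-inner product `⟨f,g⟩ = lim_{m→∞, m ∈ ℕ} ∫_m^{m+1} ⟪f(α), g(α)⟫ dα` on `𝒮`. -/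
def sinn (f g : ℝ → H₀) : ℂ :=
  limUnder atTop
    (fun m : ℕ => ∫ α in Set.Ioc (m : ℝ) ((m : ℝ) + 1), (inner ℂ (f α) (g α) : ℂ))


/-! Put `f = 0` on `(-∞, m]`, `f = f₀` on `(m, m + 1]`, and on each later window
`(m + k, m + k + 1]` propagate `f₀` forward `k` steps with the isometries `V`, so that
`f (α + 1) = V α (f α)` for every `α > m`. As the `V α` are isometries, `‖f α‖ = ‖f₀ (α - k)‖`
on the `k`-th window, so by translation invariance of Lebesgue measure every window integral
`∫_n^{n+1} ‖f‖²` with `n ≥ m` equals `∫_m^{m+1} ‖f₀‖²`: the sequence defining `⟨f, f⟩` is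
eventually constant. -/

section Translation

variable {F : Type*} [NormedAddCommGroup F]

lemma integrableOn_Ioc_comp_sub {g : ℝ → F} {a b : ℝ} (c : ℝ)
    (hg : IntegrableOn g (Set.Ioc a b)) :
    IntegrableOn (fun α => g (α - c)) (Set.Ioc (a + c) (b + c)) := by
  rw [← Set.preimage_sub_const_Ioc]
  exact ((measurePreserving_sub_right volume c).integrableOn_comp_preimage
    (measurableEmbedding_subRight c)).2 hg

lemma setIntegral_Ioc_comp_sub [NormedSpace ℝ F] (g : ℝ → F) (a b c : ℝ) :
    ∫ α in Set.Ioc (a + c) (b + c), g (α - c) = ∫ α in Set.Ioc a b, g α := by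
  rw [← Set.preimage_sub_const_Ioc]
  exact (measurePreserving_sub_right volume c).setIntegral_preimage_emb
    (measurableEmbedding_subRight c) g _

lemma integrableOn_of_isCompact_of_Iic_of_Ioc_add_nat {g : ℝ → F} {a : ℝ}
    (hle : IntegrableOn g (Set.Iic a))
    (hwin : ∀ k : ℕ, IntegrableOn g (Set.Ioc (a + k) (a + k + 1)))
    {K : Set ℝ} (hK : IsCompact K) : IntegrableOn g K := by
  have hIic : ∀ n : ℕ, IntegrableOn g (Set.Iic (a + n)) := by
    intro n
    induction n with
    | zero => simpa using hle
    | succ n ih =>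
      rw [Nat.cast_succ, ← add_assoc,
        ← Set.Iic_union_Ioc_eq_Iic (show a + n ≤ a + n + 1 by linarith)]
      exact ih.union (hwin n)
  obtain ⟨C, hC⟩ := hK.bddAbove
  obtain ⟨n, hn⟩ := exists_nat_ge (C - a)
  exact (hIic n).mono_set fun x hx => (hC hx).trans (by linarith)

end Translation

lemma integral_inner_self_eq_ofReal {𝕜 E X : Type*} [RCLike 𝕜] [NormedAddCommGroup E]
    [InnerProductSpace 𝕜 E] [MeasurableSpace X] (μ : Measure X) (f : X → E) :
    ∫ x, (inner 𝕜 (f x) (f x) : 𝕜) ∂μ = ((∫ x, ‖f x‖ ^ 2 ∂μ : ℝ) : 𝕜) := by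
  simp_rw [inner_self_eq_norm_sq_to_K (𝕜 := 𝕜), ← RCLike.ofReal_pow]
  exact integral_ofReal

section StableExtension

variable {R E : Type*} [Semiring R] [NormedAddCommGroup E] [Module R E]

def propagate (V : ℝ → E →ₗᵢ[R] E) (g : ℝ → E) : ℕ → ℝ → E
  | 0 => g
  | k + 1 => fun α => V (α - 1) (propagate V g k (α - 1))

lemma norm_propagate (V : ℝ → E →ₗᵢ[R] E) (g : ℝ → E) :
    ∀ (k : ℕ) (α : ℝ), ‖propagate V g k α‖ = ‖g (α - k)‖
  | 0, α => by simp [propagate]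
  | k + 1, α => by
      rw [propagate, LinearIsometry.norm_map, norm_propagate V g k, sub_sub, Nat.cast_succ,
        add_comm 1]

lemma stronglyMeasurable_propagate {V : ℝ → E →ₗᵢ[R] E}
    (hV : ∀ u : ℝ → E, StronglyMeasurable u → StronglyMeasurable fun α => V α (u α))
    {g : ℝ → E} (hg : StronglyMeasurable g) : ∀ k : ℕ, StronglyMeasurable (propagate V g k)
  | 0 => hg
  | k + 1 => (hV _ (stronglyMeasurable_propagate hV hg k)).comp_measurable
      (measurable_id.sub_const 1)

lemma natCeil_sub_sub_one_eq {a α : ℝ} {k : ℕ} (hα : α ∈ Set.Ioc (a + k) (a + k + 1)) :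
    ⌈α - a - 1⌉₊ = k := by
  have hlt : (k : ℝ) - 1 < ⌈α - a - 1⌉₊ := by
    linarith [hα.1, Nat.le_ceil (α - a - 1)]
  refine le_antisymm (Nat.ceil_le.2 (by linarith [hα.2])) (Nat.lt_succ_iff.1 ?_)
  exact_mod_cast (show (k : ℝ) < ⌈α - a - 1⌉₊ + 1 by linarith)

/-- Since `⌈x⌉₊ = 0` for `x ≤ 0`, on `(-∞, a + 1]` this is the restriction of `f₀` to
`(a, a + 1]`; beyond `a + 1` it is that restriction propagated by `V`. -/
def stableExtension (V : ℝ → E →ₗᵢ[R] E) (a : ℝ) (f₀ : ℝ → E) (α : ℝ) : E :=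
  propagate V ((Set.Ioc a (a + 1)).indicator f₀) ⌈α - a - 1⌉₊ α

variable {V : ℝ → E →ₗᵢ[R] E} {a : ℝ} {f₀ : ℝ → E}

lemma stableExtension_of_le_add_one {α : ℝ} (hα : α ≤ a + 1) :
    stableExtension V a f₀ α = (Set.Ioc a (a + 1)).indicator f₀ α := by
  rw [stableExtension, Nat.ceil_eq_zero.2 (by linarith), propagate]

lemma stableExtension_of_le {α : ℝ} (hα : α ≤ a) : stableExtension V a f₀ α = 0 := by
  rw [stableExtension_of_le_add_one (by linarith),
    Set.indicator_of_notMem (fun h => hα.not_gt h.1)]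

lemma stableExtension_of_mem_Ioc {α : ℝ} (hα : α ∈ Set.Ioc a (a + 1)) :
    stableExtension V a f₀ α = f₀ α := by
  rw [stableExtension_of_le_add_one hα.2, Set.indicator_of_mem hα]

lemma stableExtension_add_one {α : ℝ} (hα : a < α) :
    stableExtension V a f₀ (α + 1) = V α (stableExtension V a f₀ α) := by
  have hceil : ⌈α + 1 - a - 1⌉₊ = ⌈α - a - 1⌉₊ + 1 := by
    rcases le_or_gt 0 (α - a - 1) with h | h
    · rw [← Nat.ceil_add_one h]
      ring_nf
    · have h₀ : α ∈ Set.Ioc (a + (0 : ℕ)) (a + (0 : ℕ) + 1) := by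
        constructor <;> push_cast <;> linarith
      have h₁ : α + 1 ∈ Set.Ioc (a + (1 : ℕ)) (a + (1 : ℕ) + 1) := by
        constructor <;> push_cast <;> linarith
      rw [natCeil_sub_sub_one_eq h₀, natCeil_sub_sub_one_eq h₁]
  simp only [stableExtension, hceil, propagate, add_sub_cancel_right]

lemma norm_stableExtension {k : ℕ} {α : ℝ} (hα : α ∈ Set.Ioc (a + k) (a + k + 1)) :
    ‖stableExtension V a f₀ α‖ = ‖f₀ (α - k)‖ := by
  have hmem : α - k ∈ Set.Ioc a (a + 1) := ⟨by linarith [hα.1], by linarith [hα.2]⟩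
  rw [stableExtension, natCeil_sub_sub_one_eq hα, norm_propagate, Set.indicator_of_mem hmem]

lemma stronglyMeasurable_stableExtension
    (hV : ∀ u : ℝ → E, StronglyMeasurable u → StronglyMeasurable fun α => V α (u α))
    (hf₀ : StronglyMeasurable f₀) : StronglyMeasurable (stableExtension V a f₀) := by
  have hjoint : StronglyMeasurable (Function.uncurry
      (propagate V ((Set.Ioc a (a + 1)).indicator f₀))) :=
    stronglyMeasurable_uncurry_of_continuous_of_stronglyMeasurable
      (fun _ => continuous_of_discreteTopology)
      (stronglyMeasurable_propagate hV (hf₀.indicator measurableSet_Ioc))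
  exact hjoint.comp_measurable
    ((Nat.measurable_ceil.comp ((measurable_id.sub_const a).sub_const 1)).prodMk measurable_id)

lemma integrableOn_norm_sq_stableExtension
    (hint : IntegrableOn (fun α => ‖f₀ α‖ ^ 2) (Set.Ioc a (a + 1))) (k : ℕ) :
    IntegrableOn (fun α => ‖stableExtension V a f₀ α‖ ^ 2) (Set.Ioc (a + k) (a + k + 1)) := by
  have hshift := integrableOn_Ioc_comp_sub (k : ℝ) hint
  rw [add_right_comm] at hshift
  exact hshift.congr_fun (fun α hα => by rw [norm_stableExtension hα]) measurableSet_Ioc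

lemma setIntegral_norm_sq_stableExtension (k : ℕ) :
    ∫ α in Set.Ioc (a + k) (a + k + 1), ‖stableExtension V a f₀ α‖ ^ 2 =
      ∫ α in Set.Ioc a (a + 1), ‖f₀ α‖ ^ 2 := by
  rw [← setIntegral_Ioc_comp_sub (fun α => ‖f₀ α‖ ^ 2) a (a + 1) k, add_right_comm a 1]
  exact setIntegral_congr_fun measurableSet_Ioc fun α hα => by rw [norm_stableExtension hα]

lemma locSqInt_stableExtension
    (hV : ∀ u : ℝ → E, StronglyMeasurable u → StronglyMeasurable fun α => V α (u α))
    (hf₀ : StronglyMeasurable f₀)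
    (hint : IntegrableOn (fun α => ‖f₀ α‖ ^ 2) (Set.Ioc a (a + 1))) :
    LocSqInt (stableExtension V a f₀) := by
  refine ⟨stronglyMeasurable_stableExtension hV hf₀, fun K hK => ?_⟩
  have hle : IntegrableOn (fun α => ‖stableExtension V a f₀ α‖ ^ 2) (Set.Iic a) :=
    integrableOn_zero.congr_fun (fun α hα => by simp [stableExtension_of_le hα]) measurableSet_Iic
  exact integrableOn_of_isCompact_of_Iic_of_Ioc_add_nat hle
    (integrableOn_norm_sq_stableExtension hint) hK

end StableExtension

lemma stableSection_stableExtension {E : Type*} [NormedAddCommGroup E] [InnerProductSpace ℂ E]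
    {V : ℝ → E →ₗᵢ[ℂ] E} {a : ℝ} {f₀ : ℝ → E}
    (hV : ∀ u : ℝ → E, StronglyMeasurable u → StronglyMeasurable fun α => V α (u α))
    (hf₀ : StronglyMeasurable f₀)
    (hint : IntegrableOn (fun α => ‖f₀ α‖ ^ 2) (Set.Ioc a (a + 1))) :
    StableSection V (stableExtension V a f₀) :=
  ⟨locSqInt_stableExtension hV hf₀ hint, max a 0 + 1, by positivity,
    .of_forall fun _ hα => stableExtension_add_one (by linarith [le_max_left a 0])⟩

theorem exists_stable_extension_of_window_section_general
    (V : ℝ → H₀ →ₗᵢ[ℂ] H₀)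
    (hV : ∀ u : ℝ → H₀, StronglyMeasurable u → StronglyMeasurable fun α => V α (u α))
    (m : ℕ) (f₀ : ℝ → H₀) (hmeas : StronglyMeasurable f₀)
    (hint : IntegrableOn (fun α => ‖f₀ α‖ ^ 2) (Set.Ioc (m : ℝ) ((m : ℝ) + 1)) volume) :
    ∃ f : ℝ → H₀, StableSection V f ∧
      (∀ α : ℝ, α ≤ (m : ℝ) → f α = 0) ∧
      (∀ᵐ α ∂(volume : Measure ℝ), α ∈ Set.Ioc (m : ℝ) ((m : ℝ) + 1) → f α = f₀ α) ∧
      (∀ᵐ α ∂(volume : Measure ℝ), (m : ℝ) ≤ α → f (α + 1) = V α (f α)) ∧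
      Tendsto (fun k : ℕ => ∫ α in Set.Ioc (k : ℝ) ((k : ℝ) + 1), (inner ℂ (f α) (f α) : ℂ))
        atTop (𝓝 ((∫ α in Set.Ioc (m : ℝ) ((m : ℝ) + 1), ‖f₀ α‖ ^ 2 : ℝ) : ℂ)) := by
  refine ⟨stableExtension V m f₀, stableSection_stableExtension hV hmeas hint,
    fun _ hα => stableExtension_of_le hα,
    .of_forall fun _ hα => stableExtension_of_mem_Ioc hα, ?_, ?_⟩
  · filter_upwards [volume.ae_ne (m : ℝ)] with α hne hle
    exact stableExtension_add_one (lt_of_le_of_ne hle hne.symm)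
  · refine tendsto_atTop_of_eventually_const (i₀ := m) fun n hn => ?_
    obtain ⟨k, rfl⟩ := Nat.exists_eq_add_of_le hn
    rw [integral_inner_self_eq_ofReal, Nat.cast_add, setIntegral_norm_sq_stableExtension]
    -- `RCLike.ofReal` and `Complex.ofReal` agree only up to unfolding
    rfl

/-- Isometric embedding of `K_m = ∫_m^{m+1} E_α dα` into `H`: every square-integrable
section supported in `(m, m+1]` extends to a stable section `f ∈ 𝒮` with
`⟨f,f⟩ = ∫_m^{m+1} ‖f₀(α)‖² dα`. -/
theorem exists_stable_extension_of_window_section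
    (V : ℝ → H₀ →ₗᵢ[ℂ] H₀)
    (hV : ∀ u : ℝ → H₀, StronglyMeasurable u → StronglyMeasurable fun α => V α (u α))
    (m : ℕ) (f₀ : ℝ → H₀) (hmeas : StronglyMeasurable f₀)
    (hsupp : ∀ᵐ α ∂(volume : Measure ℝ), α ∉ Set.Ioc (m : ℝ) ((m : ℝ) + 1) → f₀ α = 0)
    (hint : IntegrableOn (fun α => ‖f₀ α‖ ^ 2) (Set.Ioc (m : ℝ) ((m : ℝ) + 1)) volume) :
    ∃ f : ℝ → H₀, StableSection V f ∧
      (∀ α : ℝ, α ≤ (m : ℝ) → f α = 0) ∧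
      (∀ᵐ α ∂(volume : Measure ℝ), α ∈ Set.Ioc (m : ℝ) ((m : ℝ) + 1) → f α = f₀ α) ∧
      (∀ᵐ α ∂(volume : Measure ℝ), (m : ℝ) ≤ α → f (α + 1) = V α (f α)) ∧
      Tendsto (fun k : ℕ => ∫ α in Set.Ioc (k : ℝ) ((k : ℝ) + 1), (inner ℂ (f α) (f α) : ℂ))
        atTop (𝓝 ((∫ α in Set.Ioc (m : ℝ) ((m : ℝ) + 1), ‖f₀ α‖ ^ 2 : ℝ) : ℂ)) :=
  exists_stable_extension_of_window_section_general V hV m f₀ hmeas hint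

end
end

section
/- (The representation operators are isometric for the semi-inner product.) Let t > 0 and let W : ℝ → (H₀ →ₗᵢ H₀) be a family of linear isometries of H₀ such that for every measurable u : ℝ → H₀ the function α ↦ W_α(u(α)) is measurable, and such that W_{β+1} ∘ V_β = V_{β+t} ∘ W_β for every β > 0. For f : ℝ → H₀ define (Φf)(α) := W_{α−t}(f(α−t)) if α > t and (Φf)(α) := 0 otherwise. Then for all f, g ∈ 𝒮 one has ⟨Φf, Φg⟩ = ⟨f, g⟩; in particular ⟨Φf, Φf⟩ = ⟨f,f⟩, and Φ maps 𝒩 into 𝒩. -/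
/-! For stable `f, g` the density `α ↦ ⟪f α, g α⟫` is almost everywhere `1`-periodic beyond some
point, because the `V_α` are isometries; hence its integrals over the windows `(s, s + 1]` do not
depend on `s` once `s` is large. As the `W_α` are isometries too, `⟪Φf, Φg⟫(α) = ⟪f, g⟫(α - t)` for
`α > t`, so the window of `Φf, Φg` at `m` is the window of `f, g` at `m - t`, which for large `m` is
the one at `m`. The intertwining relation `W_{β+1} ∘ V_β = V_{β+t} ∘ W_β` makes `Φf` stable again,
and `Φ` visibly preserves eventual vanishing. -/

open MeasureTheory Filter Topology

noncomputable section

variable {H₀ : Type*} [NormedAddCommGroup H₀] [InnerProductSpace ℂ H₀] [CompleteSpace H₀]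

/-- The operator `Φ` of "left multiplication by a norm-one vector `x ∈ E_t`",
implemented via a family `W` of isometries: `(Φf)(α) = W_{α−t}(f(α−t))` for `α > t`
and `(Φf)(α) = 0` otherwise. -/
def Phi (t : ℝ) (W : ℝ → H₀ →ₗᵢ[ℂ] H₀) (f : ℝ → H₀) : ℝ → H₀ :=
  fun α => if t < α then W (α - t) (f (α - t)) else 0

open Set

theorem setIntegral_Ioc_eq_of_ae_periodic_on_Ici {E : Type*} [NormedAddCommGroup E]
    [NormedSpace ℝ E] {h : ℝ → E} (hint : LocallyIntegrable h) {T a : ℝ} (hT : 0 ≤ T)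
    (hper : ∀ᵐ x, a ≤ x → h (x + T) = h x) {s₁ s₂ : ℝ} (h₁ : a ≤ s₁) (h₂ : a ≤ s₂) :
    ∫ x in Ioc s₁ (s₁ + T), h x = ∫ x in Ioc s₂ (s₂ + T), h x := by
  wlog h₁₂ : s₁ ≤ s₂ generalizing s₁ s₂
  · exact (this h₂ h₁ (le_of_not_ge h₁₂)).symm
  have hii : ∀ b c : ℝ, IntervalIntegrable h volume b c := fun b c =>
    (hint.integrableOn_isCompact isCompact_uIcc).intervalIntegrable
  have hshift : ∫ x in (s₁ + T)..(s₂ + T), h x = ∫ x in s₁..s₂, h x := by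
    rw [intervalIntegral.integral_comp_add_right h T |>.symm]
    refine intervalIntegral.integral_congr_ae ?_
    rw [uIoc_of_le h₁₂]
    filter_upwards [hper] with x hx hmem using hx (h₁.trans hmem.1.le)
  rw [← intervalIntegral.integral_of_le (by linarith : s₁ ≤ s₁ + T),
    ← intervalIntegral.integral_of_le (by linarith : s₂ ≤ s₂ + T), ← sub_eq_zero,
    intervalIntegral.integral_interval_sub_interval_comm (hii _ _) (hii _ _) (hii _ _), hshift,
    sub_self]

namespace LocSqInt

variable {E : Type*} [NormedAddCommGroup E] {f g : ℝ → E}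

theorem locallyIntegrable_inner [InnerProductSpace ℂ E] (hf : LocSqInt f) (hg : LocSqInt g) :
    LocallyIntegrable (fun α => (inner ℂ (f α) (g α) : ℂ)) := by
  refine locallyIntegrable_iff.2 fun K hK => ((hf.2 K hK).add (hg.2 K hK)).mono'
    (hf.1.inner hg.1).aestronglyMeasurable.restrict (Eventually.of_forall fun α => ?_)
  calc ‖(inner ℂ (f α) (g α) : ℂ)‖ ≤ ‖f α‖ * ‖g α‖ := norm_inner_le_norm _ _
    _ ≤ ‖f α‖ ^ 2 + ‖g α‖ ^ 2 := by nlinarith [sq_nonneg (‖f α‖ - ‖g α‖)]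

theorem comp_sub_right (hf : LocSqInt f) (t : ℝ) : LocSqInt fun α => f (α - t) := by
  refine ⟨hf.1.comp_measurable (measurable_sub_const t), fun K hK => ?_⟩
  exact ((measurePreserving_sub_right volume t).integrableOn_image
    (measurableEmbedding_subRight t)).1 (hf.2 _ (hK.image (continuous_sub_right t)))

theorem of_norm_le (hf : LocSqInt f) (hg : StronglyMeasurable g) (hgf : ∀ α, ‖g α‖ ≤ ‖f α‖) :
    LocSqInt g := by
  refine ⟨hg, fun K hK => (hf.2 K hK).mono' (hg.norm.pow 2).aestronglyMeasurable.restrict ?_⟩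
  filter_upwards with α
  rw [norm_pow, norm_norm]
  exact pow_le_pow_left₀ (norm_nonneg _) (hgf α) 2

end LocSqInt

section Phi

variable {E : Type*} [NormedAddCommGroup E] [InnerProductSpace ℂ E] {V W : ℝ → E →ₗᵢ[ℂ] E}
  {t α : ℝ} {f g : ℝ → E}

theorem phi_of_lt (h : t < α) : Phi t W f α = W (α - t) (f (α - t)) := if_pos h

theorem norm_phi_le : ‖Phi t W f α‖ ≤ ‖f (α - t)‖ := by
  unfold Phi
  split_ifs <;> simp

theorem inner_phi_of_lt (h : t < α) :
    inner ℂ (Phi t W f α) (Phi t W g α) = inner ℂ (f (α - t)) (g (α - t)) := by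
  rw [phi_of_lt h, phi_of_lt h, LinearIsometry.inner_map_map]

theorem stronglyMeasurable_phi
    (hW : ∀ u : ℝ → E, StronglyMeasurable u → StronglyMeasurable fun α => W α (u α))
    (hf : StronglyMeasurable f) : StronglyMeasurable (Phi t W f) := by
  have hind : Phi t W f = (Ioi t).indicator fun α => W (α - t) (f (α - t)) := by
    funext α
    by_cases h : t < α <;> simp [Phi, h]
  rw [hind]
  exact ((hW f hf).comp_measurable (measurable_sub_const t)).indicator measurableSet_Ioi

theorem LocSqInt.phi
    (hW : ∀ u : ℝ → E, StronglyMeasurable u → StronglyMeasurable fun α => W α (u α))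
    (hf : LocSqInt f) : LocSqInt (Phi t W f) :=
  (hf.comp_sub_right t).of_norm_le (stronglyMeasurable_phi hW hf.1) fun _ => norm_phi_le

theorem StableSection.phi (ht : 0 < t)
    (hW : ∀ u : ℝ → E, StronglyMeasurable u → StronglyMeasurable fun α => W α (u α))
    (hWV : ∀ β : ℝ, 0 < β → ∀ v : E, W (β + 1) (V β v) = V (β + t) (W β v))
    (hf : StableSection V f) : StableSection V (Phi t W f) := by
  obtain ⟨hfL, α₀, hα₀, hstab⟩ := hf
  refine ⟨hfL.phi hW, α₀ + t, by linarith, ?_⟩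
  filter_upwards [(measurePreserving_sub_right volume t).quasiMeasurePreserving.ae hstab]
    with α hα hle
  rw [phi_of_lt (by linarith), phi_of_lt (by linarith), show α + 1 - t = α - t + 1 by ring,
    hα (by linarith), hWV _ (by linarith), sub_add_cancel]

theorem NullSection.phi (ht : 0 < t)
    (hW : ∀ u : ℝ → E, StronglyMeasurable u → StronglyMeasurable fun α => W α (u α))
    (hWV : ∀ β : ℝ, 0 < β → ∀ v : E, W (β + 1) (V β v) = V (β + t) (W β v))
    (hf : NullSection V f) : NullSection V (Phi t W f) := by
  obtain ⟨hfS, α₀, hα₀, hzero⟩ := hf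
  refine ⟨hfS.phi ht hW hWV, α₀ + t, by linarith, ?_⟩
  filter_upwards [(measurePreserving_sub_right volume t).quasiMeasurePreserving.ae hzero]
    with α hα hle
  rw [phi_of_lt (by linarith), hα (by linarith), map_zero]

theorem StableSection.exists_ae_inner_add_one_eq (hf : StableSection V f)
    (hg : StableSection V g) :
    ∃ a, ∀ᵐ α, a ≤ α → inner ℂ (f (α + 1)) (g (α + 1)) = (inner ℂ (f α) (g α) : ℂ) := by
  obtain ⟨-, αf, -, hfs⟩ := hf
  obtain ⟨-, αg, -, hgs⟩ := hg
  refine ⟨max αf αg, ?_⟩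
  filter_upwards [hfs, hgs] with α hf hg hα
  rw [hf (le_of_max_le_left hα), hg (le_of_max_le_right hα), LinearIsometry.inner_map_map]

theorem StableSection.setIntegral_inner_phi_eventuallyEq (hf : StableSection V f)
    (hg : StableSection V g) :
    (fun m : ℕ => ∫ α in Ioc (m : ℝ) (m + 1), inner ℂ (Phi t W f α) (Phi t W g α)) =ᶠ[atTop]
      fun m : ℕ => ∫ α in Ioc (m : ℝ) (m + 1), (inner ℂ (f α) (g α) : ℂ) := by
  obtain ⟨a, hper⟩ := hf.exists_ae_inner_add_one_eq hg
  filter_upwards [tendsto_natCast_atTop_atTop.eventually_ge_atTop (a + t),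
    tendsto_natCast_atTop_atTop.eventually_ge_atTop a,
    tendsto_natCast_atTop_atTop.eventually_ge_atTop t] with m hatm ham htm
  calc ∫ α in Ioc (m : ℝ) (m + 1), inner ℂ (Phi t W f α) (Phi t W g α)
      = ∫ α in Ioc (m : ℝ) (m + 1), (inner ℂ (f (α - t)) (g (α - t)) : ℂ) :=
        setIntegral_congr_fun measurableSet_Ioc fun α hα => inner_phi_of_lt (htm.trans_lt hα.1)
    _ = ∫ α in Ioc ((m : ℝ) - t) (m - t + 1), (inner ℂ (f α) (g α) : ℂ) := by
        rw [← intervalIntegral.integral_of_le (by linarith), ← intervalIntegral.integral_of_le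
          (by linarith), intervalIntegral.integral_comp_sub_right (fun α => inner ℂ (f α) (g α)),
          sub_add_eq_add_sub]
    _ = ∫ α in Ioc (m : ℝ) (m + 1), (inner ℂ (f α) (g α) : ℂ) :=
        setIntegral_Ioc_eq_of_ae_periodic_on_Ici (hf.1.locallyIntegrable_inner hg.1) zero_le_one
          hper (by linarith) ham

end Phi

theorem phi_isometric_for_sinn_general
    (V : ℝ → H₀ →ₗᵢ[ℂ] H₀)
    (t : ℝ) (ht : 0 < t)
    (W : ℝ → H₀ →ₗᵢ[ℂ] H₀)
    (hW : ∀ u : ℝ → H₀, StronglyMeasurable u → StronglyMeasurable fun α => W α (u α))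
    (hWV : ∀ β : ℝ, 0 < β → ∀ v : H₀, W (β + 1) (V β v) = V (β + t) (W β v)) :
    (∀ f g : ℝ → H₀, StableSection V f → StableSection V g → ∀ c : ℂ,
        Tendsto (fun m : ℕ => ∫ α in Set.Ioc (m : ℝ) ((m : ℝ) + 1),
            (inner ℂ (f α) (g α) : ℂ)) atTop (𝓝 c) →
        Tendsto (fun m : ℕ => ∫ α in Set.Ioc (m : ℝ) ((m : ℝ) + 1),
            (inner ℂ (Phi t W f α) (Phi t W g α) : ℂ)) atTop (𝓝 c)) ∧
    (∀ f : ℝ → H₀, NullSection V f → NullSection V (Phi t W f)) :=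
  ⟨fun _ _ hf hg _ hc => hc.congr' (hf.setIntegral_inner_phi_eventuallyEq hg).symm,
    fun _ hf => hf.phi ht hW hWV⟩

/-- The representation operators are isometric for the semi-inner product:
`⟨Φf, Φg⟩ = ⟨f, g⟩` for all `f, g ∈ 𝒮` (in particular `⟨Φf,Φf⟩ = ⟨f,f⟩`), and `Φ`
maps `𝒩` into `𝒩`. -/
theorem phi_isometric_for_sinn
    (V : ℝ → H₀ →ₗᵢ[ℂ] H₀)
    (hV : ∀ u : ℝ → H₀, StronglyMeasurable u → StronglyMeasurable fun α => V α (u α))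
    (t : ℝ) (ht : 0 < t)
    (W : ℝ → H₀ →ₗᵢ[ℂ] H₀)
    (hW : ∀ u : ℝ → H₀, StronglyMeasurable u → StronglyMeasurable fun α => W α (u α))
    (hWV : ∀ β : ℝ, 0 < β → ∀ v : H₀, W (β + 1) (V β v) = V (β + t) (W β v)) :
    (∀ f g : ℝ → H₀, StableSection V f → StableSection V g → ∀ c : ℂ,
        Tendsto (fun m : ℕ => ∫ α in Set.Ioc (m : ℝ) ((m : ℝ) + 1),
            (inner ℂ (f α) (g α) : ℂ)) atTop (𝓝 c) →
        Tendsto (fun m : ℕ => ∫ α in Set.Ioc (m : ℝ) ((m : ℝ) + 1),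
            (inner ℂ (Phi t W f α) (Phi t W g α) : ℂ)) atTop (𝓝 c)) ∧
    (∀ f : ℝ → H₀, NullSection V f → NullSection V (Phi t W f)) :=
  phi_isometric_for_sinn_general V t ht W hW hWV

end
end
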